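/- Let D be a 2-minimal (hence link-minimal) acyclic multicast network with source s. Then every class of the subtree decomposition of D forms a directed tree in which all arcs are directed away from a unique root node, and that root is either the source s or a node of in-degree 2; moreover no class contains two arcs entering the same node. -/

import Mathlib

namespace NCMinor

variable {V A : Type}

/-- `IsArcWalk tl hd u v p` : the list of arcs `p` forms a directed walk from `u` to `v`
in the multigraph with tail map `tl` and head map `hd`. -/
def IsArcWalk (tl hd : A → V) : V → V → List A → Prop
  | u, v, [] => u = v
  | u, v, a :: p => tl a = u ∧ IsArcWalk tl hd (hd a) v p

/-- `lam tl hd s v` : the maximum number of pairwise arc-disjoint directed paths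
from `s` to `v`. -/
noncomputable def lam (tl hd : A → V) (s v : V) : ℕ :=
  sSup {k | ∃ P : Fin k → List A,
    (∀ i, IsArcWalk tl hd s v (P i)) ∧
    ∀ i j : Fin k, i ≠ j → ∀ a, a ∈ P i → a ∉ P j}

/-- in-degree -/
noncomputable def inDeg (hd : A → V) (v : V) : ℕ := {a | hd a = v}.ncard

/-- `cutVal tl hd U` : number of arcs entering the node set `U` from outside. -/
noncomputable def cutVal (tl hd : A → V) (U : Set V) : ℕ :=
  {a | tl a ∉ U ∧ hd a ∈ U}.ncard

/-- `eta tl hd s u v` : minimum value of a cut separating `{u, v}` from `s`. -/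
noncomputable def eta (tl hd : A → V) (s u v : V) : ℕ :=
  sInf {k | ∃ U : Set V, u ∈ U ∧ v ∈ U ∧ s ∉ U ∧ cutVal tl hd U = k}

def Acyclic (tl hd : A → V) : Prop := ∀ v p, IsArcWalk tl hd v v p → p = []

/-- deleting any arc decreases the max-flow to some node. -/
def LinkMinimal (tl hd : A → V) (s : V) : Prop :=
  ∀ a : A, ∃ v : V,
    lam (fun b : {b : A // b ≠ a} => tl b.1) (fun b => hd b.1) s v < lam tl hd s v

/-- rate 2 is feasible to every receiver, but infeasible after deleting any arc. -/
def TwoMinimal (tl hd : A → V) (s : V) (T : Set V) : Prop :=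
  (∀ t ∈ T, 2 ≤ lam tl hd s t) ∧
  ∀ a : A, ∃ t ∈ T,
    lam (fun b : {b : A // b ≠ a} => tl b.1) (fun b => hd b.1) s t < 2

/-- a rate-2 linear coding solution over the field `F`. -/
def IsCodingSolution (tl hd : A → V) (s : V) (T : Set V) {F : Type} [Field F]
    (φ : A → F × F) : Prop :=
  (∀ a, φ a ≠ 0) ∧
  (∀ a, tl a ≠ s → φ a ∈ Submodule.span F (φ '' {b | hd b = tl a})) ∧
  (∀ t ∈ T, Submodule.span F (φ '' {b | hd b = t}) = ⊤)

/-- generating relation of the subtree decomposition: consecutive arcs through an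
in-degree-1 node lie in the same class. -/
def SubtreeRel (tl hd : A → V) (a b : A) : Prop :=
  hd a = tl b ∧ inDeg hd (hd a) = 1

/-- the subtrees: classes of arcs generated by `SubtreeRel`. -/
def Subtrees (tl hd : A → V) : Type := Quot (SubtreeRel tl hd)

/-- the subtree graph: two subtrees are adjacent iff some node of in-degree 2 has one
incoming arc in each. -/
def subtreeGraph (tl hd : A → V) : SimpleGraph (Subtrees tl hd) where
  Adj x y := x ≠ y ∧ ∃ a b : A,
    Quot.mk _ a = x ∧ Quot.mk _ b = y ∧ hd a = hd b ∧ inDeg hd (hd a) = 2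
  symm := by
    constructor
    rintro x y ⟨hxy, a, b, ha, hb, hab, hdeg⟩
    exact ⟨hxy.symm, b, a, hb, ha, hab.symm, hab ▸ hdeg⟩
  loopless := by constructor; rintro x ⟨hxx, -⟩; exact hxx rfl

/-- the underlying (undirected, simple) topology of the network. -/
def topology (tl hd : A → V) : SimpleGraph V where
  Adj u v := u ≠ v ∧ ∃ a, (tl a = u ∧ hd a = v) ∨ (tl a = v ∧ hd a = u)
  symm := by constructor; rintro u v ⟨huv, a, h⟩; exact ⟨huv.symm, a, h.symm⟩
  loopless := by constructor; rintro u ⟨h, -⟩; exact h rfl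

/-- graph minor via branch sets. -/
def IsMinor {W : Type} (M : SimpleGraph W) (G : SimpleGraph V) : Prop :=
  ∃ B : W → Set V,
    (∀ m, (G.induce (B m)).Connected) ∧
    (Pairwise fun m m' => Disjoint (B m) (B m')) ∧
    ∀ m m', M.Adj m m' → ∃ u ∈ B m, ∃ v ∈ B m', G.Adj u v

/-- `S` is the arc set of an `s`-rooted out-tree. -/
def IsOutTree (tl hd : A → V) (s : V) (S : Set A) : Prop :=
  (∀ a ∈ S, hd a ≠ s) ∧
  Set.InjOn hd S ∧
  ∀ a ∈ S, ∃ p : List A, (∀ b ∈ p, b ∈ S) ∧ IsArcWalk tl hd s (tl a) p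

/-- node `v` belongs to the out-tree with root `s` and arc set `S`. -/
def MemTree (tl hd : A → V) (s : V) (S : Set A) (v : V) : Prop :=
  v = s ∨ ∃ a ∈ S, hd a = v ∨ tl a = v

/-- tree decomposition of the graph `G` with host tree `H` and bags `B`. -/
structure IsTreeDecomp (G : SimpleGraph V) {X : Type} (H : SimpleGraph X)
    (B : X → Set V) : Prop where
  isTree : H.IsTree
  mem_bag : ∀ v, ∃ x, v ∈ B x
  edge_bag : ∀ u v, G.Adj u v → ∃ x, u ∈ B x ∧ v ∈ B x
  bag_connected : ∀ v : V, (H.induce {x | v ∈ B x}).Connected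

/-- size of a largest clique. -/
noncomputable def cliqueNumber {W : Type} (G : SimpleGraph W) : ℕ :=
  sSup {n | ∃ t : Finset W, G.IsNClique n t}

end NCMinor

/-!
Following in-degree-one nodes backwards, every arc `b` has a *stem*: the unique walk into `tl b`
through nodes of in-degree `1`, starting at a node of in-degree `≠ 1`. The first arc of the stem
followed by `b` is unchanged along the subtree relation, so a subtree class is the set of arcs
with a given root arc `a₀`, and its arcs are reached from `tl a₀` along stems inside the class.
Every walk from the source through an arc of the class passes through `a₀`.

Acyclicity keeps arcs of the class from entering `tl a₀`. Two arcs `b₁ ≠ b₂` of the class entering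
a common node are excluded by 2-minimality: some receiver needs `b₂`, but any pair of arc-disjoint
walks to it can be rerouted along the stem of `b₁`. Finally `tl a₀` has in-degree `≠ 1`. In-degree
`0` makes it the source, since every arc tail is reachable from the source; in-degree `≥ 3` is
impossible, since by Menger's theorem each arc into a node enters a cut of value `2` separating
some receiver from the source, and submodularity of cuts forbids three such arcs.
-/

namespace NCMinor

section

variable {V A : Type} {tl hd : A → V}

section Walks

theorem isArcWalk_append_iff {u w : V} {p q : List A} :
    IsArcWalk tl hd u w (p ++ q) ↔ ∃ v, IsArcWalk tl hd u v p ∧ IsArcWalk tl hd v w q := by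
  induction p generalizing u with
  | nil => exact ⟨fun h => ⟨u, rfl, h⟩, fun ⟨_, huv, h⟩ => huv ▸ h⟩
  | cons a p ih =>
    simp only [List.cons_append, IsArcWalk, ih]
    exact ⟨fun ⟨ha, v, h⟩ => ⟨v, ⟨ha, h.1⟩, h.2⟩, fun ⟨v, ⟨ha, h₁⟩, h₂⟩ => ⟨ha, v, h₁, h₂⟩⟩

theorem IsArcWalk.append {u v w : V} {p q : List A} (hp : IsArcWalk tl hd u v p)
    (hq : IsArcWalk tl hd v w q) : IsArcWalk tl hd u w (p ++ q) :=
  isArcWalk_append_iff.2 ⟨v, hp, hq⟩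

@[simp]
theorem isArcWalk_singleton {u v : V} {a : A} :
    IsArcWalk tl hd u v [a] ↔ tl a = u ∧ hd a = v :=
  Iff.rfl

theorem isArcWalk_map {B : Type} (f : B → A) {u v : V} {p : List B} :
    IsArcWalk tl hd u v (p.map f) ↔ IsArcWalk (tl ∘ f) (hd ∘ f) u v p := by
  induction p generalizing u with
  | nil => rfl
  | cons b p ih => exact and_congr Iff.rfl ih

theorem IsArcWalk.exists_mem_crossing {u v : V} {p : List A} (h : IsArcWalk tl hd u v p)
    {U : Set V} (hu : u ∉ U) (hv : v ∈ U) : ∃ a ∈ p, tl a ∉ U ∧ hd a ∈ U := by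
  induction p generalizing u with
  | nil => exact absurd (h ▸ hv) hu
  | cons a p ih =>
    by_cases ha : hd a ∈ U
    · exact ⟨a, List.mem_cons_self, h.1 ▸ hu, ha⟩
    · obtain ⟨b, hb, hbU⟩ := ih h.2 ha
      exact ⟨b, List.mem_cons_of_mem _ hb, hbU⟩

theorem IsArcWalk.exists_nodup {u v : V} {p : List A} (h : IsArcWalk tl hd u v p) :
    ∃ q, IsArcWalk tl hd u v q ∧ q.Nodup ∧ q ⊆ p := by
  induction p generalizing u with
  | nil => exact ⟨[], h, List.nodup_nil, List.Subset.refl _⟩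
  | cons a p ih =>
    obtain ⟨q, hq, hnd, hqp⟩ := ih h.2
    by_cases haq : a ∈ q
    · obtain ⟨q₁, q₂, rfl⟩ := List.append_of_mem haq
      obtain ⟨w, -, hw⟩ := isArcWalk_append_iff.1 hq
      refine ⟨a :: q₂, ⟨h.1, hw.2⟩, (List.nodup_append.1 hnd).2.1, ?_⟩
      exact List.Subset.trans (fun b hb => by simp_all) (List.subset_cons_of_subset a hqp)
    · exact ⟨a :: q, ⟨h.1, hq⟩, List.nodup_cons.2 ⟨haq, hnd⟩, List.cons_subset_cons a hqp⟩

theorem IsArcWalk.nodup (hacyc : Acyclic tl hd) {u v : V} {p : List A}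
    (h : IsArcWalk tl hd u v p) : p.Nodup := by
  induction p generalizing u with
  | nil => exact List.nodup_nil
  | cons a p ih =>
    refine List.nodup_cons.2 ⟨fun hap => ?_, ih h.2⟩
    obtain ⟨q, r, rfl⟩ := List.append_of_mem hap
    obtain ⟨w, hq, hw⟩ := isArcWalk_append_iff.1 h.2
    simpa using hacyc _ (a :: q) ⟨rfl, hw.1 ▸ hq⟩

def reachSet (tl hd : A → V) (s : V) : Set V := {v | ∃ p, IsArcWalk tl hd s v p}

theorem hd_mem_reachSet {s : V} {a : A} (ha : tl a ∈ reachSet tl hd s) :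
    hd a ∈ reachSet tl hd s :=
  let ⟨p, hp⟩ := ha
  ⟨p ++ [a], hp.append ⟨rfl, rfl⟩⟩

theorem IsArcWalk.exists_isArcWalk_tl_of_mem {u v : V} {p : List A}
    (hp : IsArcWalk tl hd u v p) {e : A} (he : e ∈ p) : ∃ q, IsArcWalk tl hd u (tl e) q := by
  obtain ⟨q, r, rfl⟩ := List.append_of_mem he
  obtain ⟨w, hq, hw⟩ := isArcWalk_append_iff.1 hp
  exact ⟨q, hw.1 ▸ hq⟩

theorem eq_of_mem_reachSet_of_inDeg_eq_zero [Finite A] {s v : V} (hv : v ∈ reachSet tl hd s)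
    (h0 : inDeg hd v = 0) : v = s := by
  obtain ⟨p, hp⟩ := hv
  rcases p.eq_nil_or_concat' with rfl | ⟨q, a, rfl⟩
  · exact hp.symm
  · obtain ⟨w, -, -, ha⟩ := isArcWalk_append_iff.1 hp
    rw [inDeg, Set.ncard_eq_zero] at h0
    exact absurd (h0 ▸ ha : a ∈ (∅ : Set A)) (Set.notMem_empty a)

end Walks

section DisjointWalks

theorem two_le_lam_iff [Finite A] {s v : V} (hsv : s ≠ v) :
    2 ≤ lam tl hd s v ↔ ∃ P₁ P₂ : List A,
      IsArcWalk tl hd s v P₁ ∧ IsArcWalk tl hd s v P₂ ∧ P₁.Disjoint P₂ := by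
  unfold lam
  set S := {k | ∃ P : Fin k → List A, (∀ i, IsArcWalk tl hd s v (P i)) ∧
      ∀ i j : Fin k, i ≠ j → ∀ a, a ∈ P i → a ∉ P j}
  have hbdd : BddAbove S := by
    refine ⟨Nat.card A, fun k ⟨P, hP, hdisj⟩ => ?_⟩
    have hne : ∀ i, P i ≠ [] := fun i h => hsv (by simpa [h, IsArcWalk] using hP i)
    have hinj : Function.Injective fun i => (P i).head (hne i) := fun i j hij =>
      by_contra fun h => hdisj i j h _ (List.head_mem _) (by
        simp only at hij
        rw [hij]
        exact List.head_mem _)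
    simpa using Nat.card_le_card_of_injective _ hinj
  constructor
  · intro h
    obtain ⟨P, hP, hdisj⟩ :=
      Nat.sSup_mem (⟨0, fun i => i.elim0, fun i => i.elim0, fun i => i.elim0⟩ : S.Nonempty) hbdd
    exact ⟨P ⟨0, by omega⟩, P ⟨1, by omega⟩, hP _, hP _,
      fun a h₁ h₂ => hdisj _ _ (by simp) a h₁ h₂⟩
  · rintro ⟨P₁, P₂, h₁, h₂, h₁₂⟩
    refine le_csSup hbdd ⟨![P₁, P₂], fun i => by fin_cases i <;> assumption, ?_⟩
    intro i j hij a
    fin_cases i <;> fin_cases j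
    all_goals first
      | exact absurd rfl hij
      | exact fun ha hb => h₁₂ ha hb
      | exact fun ha hb => h₁₂ hb ha

theorem two_le_lam_delete [Finite A] {s v : V} (hsv : s ≠ v) {e : A} {P₁ P₂ : List A}
    (h₁ : IsArcWalk tl hd s v P₁) (h₂ : IsArcWalk tl hd s v P₂) (h₁₂ : P₁.Disjoint P₂)
    (he₁ : e ∉ P₁) (he₂ : e ∉ P₂) :
    2 ≤ lam (fun b : {b : A // b ≠ e} => tl b.1) (fun b => hd b.1) s v := by
  lift P₁ to List {b : A // b ≠ e} using fun b hb h => he₁ (h ▸ hb)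
  lift P₂ to List {b : A // b ≠ e} using fun b hb h => he₂ (h ▸ hb)
  rw [isArcWalk_map] at h₁ h₂
  exact (two_le_lam_iff hsv).2 ⟨P₁, P₂, h₁, h₂,
    fun a ha₁ ha₂ => h₁₂ (List.mem_map_of_mem ha₁) (List.mem_map_of_mem ha₂)⟩

theorem two_le_cutVal_of_isArcWalk [Finite A] {s t : V} {P₁ P₂ : List A}
    (h₁ : IsArcWalk tl hd s t P₁) (h₂ : IsArcWalk tl hd s t P₂) (h₁₂ : P₁.Disjoint P₂)
    {U : Set V} (htU : t ∈ U) (hsU : s ∉ U) : 2 ≤ cutVal tl hd U := by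
  obtain ⟨e₁, he₁, hU₁⟩ := h₁.exists_mem_crossing hsU htU
  obtain ⟨e₂, he₂, hU₂⟩ := h₂.exists_mem_crossing hsU htU
  have hne : e₁ ≠ e₂ := by rintro rfl; exact h₁₂ he₁ he₂
  exact (Set.one_lt_ncard_iff).2 ⟨e₁, e₂, hU₁, hU₂, hne⟩

end DisjointWalks

section Menger

open scoped Classical

theorem cutVal_compl_reachSet (s : V) : cutVal tl hd (reachSet tl hd s)ᶜ = 0 := by
  simp only [cutVal, Set.mem_compl_iff, not_not]
  convert Set.ncard_empty A
  exact Set.eq_empty_of_forall_notMem fun a ha => ha.2 (hd_mem_reachSet ha.1)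

/-- The residual graph of a unit flow `F`: the arcs of `F` are reversed. -/
noncomputable def residualTl (tl hd : A → V) (F : Finset A) (a : A) : V :=
  if a ∈ F then hd a else tl a

noncomputable def residualHd (tl hd : A → V) (F : Finset A) (a : A) : V :=
  if a ∈ F then tl a else hd a

noncomputable def netOutflow (tl hd : A → V) (K : Finset A) (v : V) : ℤ :=
  ∑ a ∈ K, ((if tl a = v then 1 else 0) - if hd a = v then 1 else 0)

theorem netOutflow_of_isArcWalk {u w : V} {p : List A} (h : IsArcWalk tl hd u w p)
    (hp : p.Nodup) (v : V) :
    netOutflow tl hd p.toFinset v = (if u = v then 1 else 0) - if w = v then 1 else 0 := by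
  induction p generalizing u with
  | nil => cases h; simp [netOutflow]
  | cons a p ih =>
    obtain ⟨rfl, h⟩ := h
    rw [List.nodup_cons] at hp
    rw [List.toFinset_cons, netOutflow, Finset.sum_insert (by simpa using hp.1), ← netOutflow,
      ih h hp.2]
    ring

theorem netOutflow_sdiff {K L : Finset A} (hLK : L ⊆ K) (v : V) :
    netOutflow tl hd (K \ L) v = netOutflow tl hd K v - netOutflow tl hd L v :=
  Finset.sum_sdiff_eq_sub hLK

theorem netOutflow_symmDiff (F Q : Finset A) (v : V) :
    netOutflow tl hd (symmDiff F Q) v =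
      netOutflow tl hd F v + netOutflow (residualTl tl hd F) (residualHd tl hd F) Q v := by
  have hsum : ∀ K ⊆ F ∪ Q, ∀ f : A → ℤ, ∑ a ∈ K, f a = ∑ a ∈ F ∪ Q, if a ∈ K then f a else 0 :=
    fun K hK f => by rw [Finset.sum_ite_mem, Finset.inter_eq_right.2 hK]
  rw [netOutflow, netOutflow, netOutflow, hsum _ symmDiff_le_sup, hsum F Finset.subset_union_left,
    hsum Q Finset.subset_union_right, ← Finset.sum_add_distrib]
  refine Finset.sum_congr rfl fun a _ => ?_
  by_cases haF : a ∈ F <;> by_cases haQ : a ∈ Q <;>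
    simp [Finset.mem_symmDiff, residualTl, residualHd, haF, haQ]

theorem exists_isArcWalk_of_netOutflow {s z : V} {K : Finset A} {c : ℤ} (hc : 1 ≤ c)
    (hK : ∀ v, netOutflow tl hd K v = c * ((if s = v then 1 else 0) - if z = v then 1 else 0)) :
    ∃ p : List A, IsArcWalk tl hd s z p ∧ p.Nodup ∧ p.toFinset ⊆ K := by
  by_contra! hno
  -- otherwise nodup walks from `s` inside `K` could be extended indefinitely
  have hgrow : ∀ n, ∃ p y, IsArcWalk tl hd s y p ∧ p.Nodup ∧ p.toFinset ⊆ K ∧ p.length = n := by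
    intro n
    induction n with
    | zero => exact ⟨[], s, rfl, List.nodup_nil, by simp, rfl⟩
    | succ n ih =>
      obtain ⟨p, y, hp, hnd, hpK, rfl⟩ := ih
      have hyz : y ≠ z := by rintro rfl; exact hno p hp hnd hpK
      have hout : 0 < netOutflow tl hd (K \ p.toFinset) y := by
        rw [netOutflow_sdiff hpK, hK, netOutflow_of_isArcWalk hp hnd]
        split_ifs <;> simp_all; omega
      obtain ⟨e, he, hte⟩ : ∃ e ∈ K \ p.toFinset, tl e = y := by
        by_contra! h
        refine hout.not_ge (Finset.sum_nonpos fun e he => ?_)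
        rw [if_neg (h e he)]
        split_ifs <;> norm_num
      rw [Finset.mem_sdiff, List.mem_toFinset] at he
      refine ⟨p ++ [e], hd e, hp.append ⟨hte, rfl⟩, ?_, ?_, by simp⟩
      · exact List.nodup_append_comm.2 (List.nodup_cons.2 ⟨he.2, hnd⟩)
      · simpa [Finset.insert_subset_iff] using ⟨he.1, hpK⟩
  obtain ⟨p, -, -, hnd, hpK, hlen⟩ := hgrow (K.card + 1)
  have := Finset.card_le_card hpK
  rw [List.toFinset_card_of_nodup hnd, hlen] at this
  omega

theorem exists_disjoint_walks_of_residual {s z : V} {P Q : List A}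
    (hP : IsArcWalk tl hd s z P) (hPnd : P.Nodup)
    (hQ : IsArcWalk (residualTl tl hd P.toFinset) (residualHd tl hd P.toFinset) s z Q) :
    ∃ P₁ P₂ : List A, IsArcWalk tl hd s z P₁ ∧ IsArcWalk tl hd s z P₂ ∧ P₁.Disjoint P₂ := by
  obtain ⟨Q, hQ, hQnd, -⟩ := hQ.exists_nodup
  set K := symmDiff P.toFinset Q.toFinset
  have hK : ∀ v, netOutflow tl hd K v =
      2 * ((if s = v then 1 else 0) - if z = v then 1 else 0) := fun v => by
    rw [netOutflow_symmDiff, netOutflow_of_isArcWalk hP hPnd, netOutflow_of_isArcWalk hQ hQnd]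
    ring
  obtain ⟨P₁, hP₁, hnd₁, hK₁⟩ := exists_isArcWalk_of_netOutflow (by norm_num) hK
  have hK' : ∀ v, netOutflow tl hd (K \ P₁.toFinset) v =
      1 * ((if s = v then 1 else 0) - if z = v then 1 else 0) := fun v => by
    rw [netOutflow_sdiff hK₁, hK, netOutflow_of_isArcWalk hP₁ hnd₁]
    ring
  obtain ⟨P₂, hP₂, -, hK₂⟩ := exists_isArcWalk_of_netOutflow le_rfl hK'
  exact ⟨P₁, P₂, hP₁, hP₂, fun a h₁ h₂ =>
    (Finset.mem_sdiff.1 (hK₂ (List.mem_toFinset.2 h₂))).2 (List.mem_toFinset.2 h₁)⟩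

theorem cutVal_compl_reachSet_residual_le_one [Finite A] {s z : V} {P : List A}
    (hP : IsArcWalk tl hd s z P) :
    cutVal tl hd
      (reachSet (residualTl tl hd P.toFinset) (residualHd tl hd P.toFinset) s)ᶜ ≤ 1 := by
  set R := reachSet (residualTl tl hd P.toFinset) (residualHd tl hd P.toFinset) s
  have hR : ∀ b, residualTl tl hd P.toFinset b ∈ R → residualHd tl hd P.toFinset b ∈ R :=
    fun _ => hd_mem_reachSet
  have hfwd : ∀ b, tl b ∈ R → hd b ∉ R → b ∈ P := fun b h₁ h₂ => by
    by_contra hb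
    exact h₂ (by simpa [residualHd, hb] using hR b (by simpa [residualTl, hb] using h₁))
  have hbwd : ∀ b ∈ P, hd b ∈ R → tl b ∈ R := fun b hb h => by
    simpa [residualHd, hb] using hR b (by simpa [residualTl, hb] using h)
  -- after leaving `R`, `P` never re-enters it: `R` is closed under the reversed arcs of `P`
  have hlater : ∀ c d q₁ q₂, P = q₁ ++ c :: q₂ → d ∈ q₂ → hd c ∉ R → tl d ∉ R := by
    rintro c d q₁ q₂ rfl hdq hc hdR
    obtain ⟨w, -, hw⟩ := isArcWalk_append_iff.1 hP
    obtain ⟨q₃, q₄, rfl⟩ := List.append_of_mem hdq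
    obtain ⟨w', hq₃, hw'⟩ := isArcWalk_append_iff.1 hw.2
    obtain ⟨e, he, heR, heR'⟩ := hq₃.exists_mem_crossing hc (hw'.1 ▸ hdR)
    exact heR (hbwd e (by simp [he]) heR')
  refine (Set.ncard_le_one_iff_subsingleton).2 fun c ⟨hc₁, hc₂⟩ d ⟨hd₁, hd₂⟩ => ?_
  rw [Set.mem_compl_iff, not_not] at hc₁ hd₁
  by_contra hcd
  obtain ⟨q₁, q₂, hPeq⟩ := List.append_of_mem (hfwd c hc₁ hc₂)
  have hdP := hfwd d hd₁ hd₂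
  rw [hPeq, List.mem_append, List.mem_cons] at hdP
  rcases hdP with hdq | rfl | hdq
  · obtain ⟨q₃, q₄, rfl⟩ := List.append_of_mem hdq
    exact hlater d c q₃ (q₄ ++ c :: q₂) (by simp [hPeq]) (by simp) hd₂ hc₁
  · exact hcd rfl
  · exact hlater c d q₁ q₂ hPeq hdq hc₂ hd₁

theorem exists_disjoint_walks_or_cutVal_le_one [Finite A] (s z : V) :
    (∃ P₁ P₂ : List A, IsArcWalk tl hd s z P₁ ∧ IsArcWalk tl hd s z P₂ ∧ P₁.Disjoint P₂) ∨
      ∃ U : Set V, z ∈ U ∧ s ∉ U ∧ cutVal tl hd U ≤ 1 := by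
  by_cases hz : z ∈ reachSet tl hd s
  · obtain ⟨P, hP, hPnd, -⟩ := hz.choose_spec.exists_nodup
    by_cases hzR : z ∈ reachSet (residualTl tl hd P.toFinset) (residualHd tl hd P.toFinset) s
    · exact Or.inl (exists_disjoint_walks_of_residual hP hPnd hzR.choose_spec)
    · exact Or.inr ⟨_, hzR, not_not_intro ⟨[], rfl⟩, cutVal_compl_reachSet_residual_le_one hP⟩
  · exact Or.inr ⟨(reachSet tl hd s)ᶜ, hz, not_not_intro ⟨[], rfl⟩,
      (cutVal_compl_reachSet s).trans_le zero_le_one⟩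

end Menger

section Cuts

theorem cutVal_inter_add_cutVal_union_le [Finite A] (X Y : Set V) :
    cutVal tl hd (X ∩ Y) + cutVal tl hd (X ∪ Y) ≤ cutVal tl hd X + cutVal tl hd Y := by
  simp only [cutVal]
  rw [← Set.ncard_union_add_ncard_inter, ← Set.ncard_union_add_ncard_inter _ {a | tl a ∉ Y ∧ _}]
  exact add_le_add (Set.ncard_le_ncard fun a ha => by simp at ha ⊢; tauto)
    (Set.ncard_le_ncard fun a ha => by simp at ha ⊢; tauto)

open scoped Classical in
theorem cutVal_eq_cutVal_delete_add [Finite A] (a : A) (U : Set V) :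
    cutVal tl hd U = cutVal (fun b : {b : A // b ≠ a} => tl b.1) (fun b => hd b.1) U +
      if tl a ∉ U ∧ hd a ∈ U then 1 else 0 := by
  have hdel : cutVal (fun b : {b : A // b ≠ a} => tl b.1) (fun b => hd b.1) U =
      ({b | tl b ∉ U ∧ hd b ∈ U} \ {a}).ncard := by
    rw [← Set.ncard_preimage_of_injective_subset_range (s := {b | tl b ∉ U ∧ hd b ∈ U} \ {a})
      Subtype.val_injective fun b hb => ⟨⟨b, hb.2⟩, rfl⟩]
    exact congrArg Set.ncard (Set.ext fun b => ⟨fun h => ⟨h, b.2⟩, fun h => h.1⟩)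
  rw [hdel]
  split_ifs with h
  · exact (Set.ncard_sdiff_singleton_add_one (s := {b | tl b ∉ U ∧ hd b ∈ U}) h).symm
  · rw [Set.sdiff_singleton_eq_self (s := {b | tl b ∉ U ∧ hd b ∈ U}) h, add_zero]
    rfl

end Cuts

section TwoMinimal

variable {s : V} {T : Set V}

theorem TwoMinimal.exists_essential [Finite A] (hmin : TwoMinimal tl hd s T) (hsT : s ∉ T)
    (e : A) : ∃ t,
      (∃ P₁ P₂ : List A, IsArcWalk tl hd s t P₁ ∧ IsArcWalk tl hd s t P₂ ∧ P₁.Disjoint P₂) ∧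
      ∀ P₁ P₂ : List A, IsArcWalk tl hd s t P₁ → IsArcWalk tl hd s t P₂ → P₁.Disjoint P₂ →
        e ∈ P₁ ∨ e ∈ P₂ := by
  obtain ⟨t, ht, hlt⟩ := hmin.2 e
  have hst : s ≠ t := fun h => hsT (h ▸ ht)
  refine ⟨t, (two_le_lam_iff hst).1 (hmin.1 t ht), fun P₁ P₂ h₁ h₂ h₁₂ => ?_⟩
  by_contra! he
  exact hlt.not_ge (two_le_lam_delete hst h₁ h₂ h₁₂ he.1 he.2)

theorem TwoMinimal.hd_ne_source [Finite A] (hmin : TwoMinimal tl hd s T) (hsT : s ∉ T)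
    (hacyc : Acyclic tl hd) (e : A) : hd e ≠ s := by
  intro he
  obtain ⟨t, ⟨P₁, P₂, h₁, h₂, h₁₂⟩, hess⟩ := hmin.exists_essential hsT e
  have hnot : ∀ P, IsArcWalk tl hd s t P → e ∉ P := fun P hP heP => by
    obtain ⟨q, hq⟩ := hP.exists_isArcWalk_tl_of_mem heP
    simpa using hacyc s (q ++ [e]) (hq.append ⟨rfl, he⟩)
  exact (hess P₁ P₂ h₁ h₂ h₁₂).elim (hnot P₁ h₁) (hnot P₂ h₂)

theorem TwoMinimal.tl_mem_reachSet [Finite A] (hmin : TwoMinimal tl hd s T) (hsT : s ∉ T)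
    (e : A) : tl e ∈ reachSet tl hd s := by
  obtain ⟨t, ⟨P₁, P₂, h₁, h₂, h₁₂⟩, hess⟩ := hmin.exists_essential hsT e
  exact (hess P₁ P₂ h₁ h₂ h₁₂).elim h₁.exists_isArcWalk_tl_of_mem h₂.exists_isArcWalk_tl_of_mem

theorem TwoMinimal.inDeg_source [Finite A] (hmin : TwoMinimal tl hd s T) (hsT : s ∉ T)
    (hacyc : Acyclic tl hd) : inDeg hd s = 0 := by
  rw [inDeg, Set.ncard_eq_zero]
  exact Set.eq_empty_of_forall_notMem fun e => hmin.hd_ne_source hsT hacyc e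

theorem TwoMinimal.two_le_cutVal [Finite A] (hmin : TwoMinimal tl hd s T) (hsT : s ∉ T)
    {U : Set V} (hU : ∃ t ∈ T, t ∈ U) (hsU : s ∉ U) : 2 ≤ cutVal tl hd U := by
  obtain ⟨t, ht, htU⟩ := hU
  obtain ⟨P₁, P₂, h₁, h₂, h₁₂⟩ := (two_le_lam_iff (fun h => hsT (h ▸ ht) : s ≠ t)).1 (hmin.1 t ht)
  exact two_le_cutVal_of_isArcWalk h₁ h₂ h₁₂ htU hsU

theorem TwoMinimal.exists_cut [Finite A] (hmin : TwoMinimal tl hd s T) (hsT : s ∉ T) (a : A) :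
    ∃ U : Set V, (∃ t ∈ T, t ∈ U) ∧ s ∉ U ∧ tl a ∉ U ∧ hd a ∈ U ∧ cutVal tl hd U ≤ 2 := by
  obtain ⟨t, ht, hlt⟩ := hmin.2 a
  have hst : s ≠ t := fun h => hsT (h ▸ ht)
  rcases exists_disjoint_walks_or_cutVal_le_one (tl := fun b : {b : A // b ≠ a} => tl b.1)
    (hd := fun b => hd b.1) s t with hpair | ⟨U, htU, hsU, hU⟩
  · exact absurd ((two_le_lam_iff hst).2 hpair) hlt.not_ge
  have h2 := hmin.two_le_cutVal hsT ⟨t, ht, htU⟩ hsU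
  rw [cutVal_eq_cutVal_delete_add a] at h2
  have hcross : tl a ∉ U ∧ hd a ∈ U := by
    by_contra h
    rw [if_neg h] at h2
    omega
  refine ⟨U, ⟨t, ht, htU⟩, hsU, hcross.1, hcross.2, ?_⟩
  rw [cutVal_eq_cutVal_delete_add a, if_pos hcross]
  omega

theorem TwoMinimal.inDeg_le_two [Finite A] (hmin : TwoMinimal tl hd s T) (hsT : s ∉ T)
    (v : V) : inDeg hd v ≤ 2 := by
  by_contra! h
  obtain ⟨a₁, a₂, a₃, h₁, h₂, h₃, h₁₂, h₁₃, h₂₃⟩ := (Set.two_lt_ncard_iff).1 h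
  obtain ⟨U₁, ⟨t₁, ht₁, ht₁U⟩, hsU₁, htl₁, hhd₁, hU₁⟩ := hmin.exists_cut hsT a₁
  obtain ⟨U₂, -, hsU₂, htl₂, hhd₂, hU₂⟩ := hmin.exists_cut hsT a₂
  obtain ⟨U₃, ⟨t₃, ht₃, ht₃U⟩, hsU₃, htl₃, hhd₃, hU₃⟩ := hmin.exists_cut hsT a₃
  obtain rfl : hd a₁ = v := h₁
  -- submodularity applied twice bounds `cutVal (U₁ ∩ U₂ ∩ U₃)` by `2`
  have hsub₁₂ := cutVal_inter_add_cutVal_union_le (tl := tl) (hd := hd) U₁ U₂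
  have hsub₁₂₃ := cutVal_inter_add_cutVal_union_le (tl := tl) (hd := hd) (U₁ ∩ U₂) U₃
  have hunion₁₂ := hmin.two_le_cutVal hsT (U := U₁ ∪ U₂) ⟨t₁, ht₁, Or.inl ht₁U⟩
    (by simp [hsU₁, hsU₂])
  have hunion₁₂₃ := hmin.two_le_cutVal hsT (U := U₁ ∩ U₂ ∪ U₃) ⟨t₃, ht₃, Or.inr ht₃U⟩
    (by simp [hsU₁, hsU₃])
  have hinter : 2 < cutVal tl hd (U₁ ∩ U₂ ∩ U₃) :=
    (Set.two_lt_ncard_iff).2 ⟨a₁, a₂, a₃, by simp_all, by simp_all, by simp_all, h₁₂, h₁₃, h₂₃⟩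
  omega

end TwoMinimal

section Stems

theorem eq_of_inDeg_eq_one {v : V} (h : inDeg hd v = 1) {a b : A} (ha : hd a = v)
    (hb : hd b = v) : a = b := by
  obtain ⟨c, hc⟩ := Set.ncard_eq_one.1 h
  have ha' : a ∈ ({c} : Set A) := hc ▸ ha
  have hb' : b ∈ ({c} : Set A) := hc ▸ hb
  exact ha'.trans hb'.symm

theorem IsArcWalk.exists_eq_append_of_inDeg_eq_one {u r v : V} {q p : List A}
    (hq : IsArcWalk tl hd u v q) (hu : inDeg hd u ≠ 1) (hp : IsArcWalk tl hd r v p)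
    (hp₁ : ∀ c ∈ p, inDeg hd (hd c) = 1) : ∃ W, q = W ++ p ∧ IsArcWalk tl hd u r W := by
  induction p using List.reverseRecOn generalizing v q with
  | nil => exact ⟨q, by simp, (hp : r = v) ▸ hq⟩
  | append_singleton p c ih =>
    obtain ⟨w, hpw, rfl, rfl⟩ := isArcWalk_append_iff.1 hp
    have h₁ : inDeg hd (hd c) = 1 := hp₁ c (by simp)
    rcases q.eq_nil_or_concat' with rfl | ⟨q, e, rfl⟩
    · exact absurd ((hq : u = hd c) ▸ h₁) hu
    obtain ⟨w', hqw, rfl, he⟩ := isArcWalk_append_iff.1 hq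
    obtain rfl := eq_of_inDeg_eq_one h₁ he rfl
    obtain ⟨W, rfl, hW⟩ := ih hqw hpw fun c hc => hp₁ c (by simp [hc])
    exact ⟨W, by simp, hW⟩

theorem Acyclic.wellFounded_subtreeRel [Finite A] (hacyc : Acyclic tl hd) :
    WellFounded (SubtreeRel tl hd) := by
  have hwalk : ∀ a b, Relation.TransGen (SubtreeRel tl hd) a b →
      ∃ p, IsArcWalk tl hd (tl a) (tl b) (a :: p) := by
    intro a b h
    induction h with
    | single h => exact ⟨[], rfl, h.1⟩
    | tail _ hbc ih =>
      obtain ⟨p, hp⟩ := ih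
      exact ⟨p ++ [_], by simpa using hp.append (isArcWalk_singleton.2 ⟨rfl, hbc.1⟩)⟩
  have : Std.Irrefl (Relation.TransGen (SubtreeRel tl hd)) := ⟨fun a h => by
    obtain ⟨p, hp⟩ := hwalk a a h
    simpa using hacyc _ _ hp⟩
  exact Subrelation.wf Relation.TransGen.single (Finite.wellFounded_of_trans_of_irrefl _)

theorem mk_eq_of_isArcWalk {r : V} {b : A} {p : List A} (hp : IsArcWalk tl hd r (tl b) p)
    (hp₁ : ∀ c ∈ p, inDeg hd (hd c) = 1) :
    ∀ c ∈ p, Quot.mk (SubtreeRel tl hd) c = Quot.mk (SubtreeRel tl hd) b := by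
  induction p using List.reverseRecOn generalizing b with
  | nil => simp
  | append_singleton p a ih =>
    obtain ⟨w, hpw, rfl, ha⟩ := isArcWalk_append_iff.1 hp
    have hab : Quot.mk (SubtreeRel tl hd) a = Quot.mk _ b :=
      Quot.sound ⟨ha, hp₁ a (by simp)⟩
    intro c hc
    rcases List.mem_append.1 hc with hc | hc
    · exact (ih hpw (fun c hc => hp₁ c (by simp [hc])) c hc).trans hab
    · exact List.mem_singleton.1 hc ▸ hab

/-- `p` is the walk into `v` through nodes of in-degree `1`, traced back to a node `r` of
in-degree `≠ 1`. -/
def IsStem (tl hd : A → V) (r : V) (p : List A) (v : V) : Prop :=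
  IsArcWalk tl hd r v p ∧ inDeg hd r ≠ 1 ∧ ∀ c ∈ p, inDeg hd (hd c) = 1

theorem IsStem.append_singleton {r : V} {p : List A} {a b : A} (hp : IsStem tl hd r p (tl a))
    (hab : SubtreeRel tl hd a b) : IsStem tl hd r (p ++ [a]) (tl b) :=
  ⟨hp.1.append ⟨rfl, hab.1⟩, hp.2.1, by
    simpa [or_imp, forall_and] using ⟨hp.2.2, hab.2⟩⟩

theorem IsStem.exists_eq_append_singleton {r : V} {q : List A} {a b : A}
    (hq : IsStem tl hd r q (tl b)) (hab : SubtreeRel tl hd a b) :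
    ∃ p, q = p ++ [a] ∧ IsStem tl hd r p (tl a) := by
  obtain ⟨W, rfl, hW⟩ :=
    hq.1.exists_eq_append_of_inDeg_eq_one hq.2.1 (p := [a]) ⟨rfl, hab.1⟩ (by simpa using hab.2)
  exact ⟨W, rfl, hW, hq.2.1, fun c hc => hq.2.2 c (by simp [hc])⟩

theorem exists_isStem [Finite A] (hacyc : Acyclic tl hd) (b : A) :
    ∃ r p, IsStem tl hd r p (tl b) := by
  induction b using hacyc.wellFounded_subtreeRel.induction with
  | _ b ih =>
    by_cases h₁ : inDeg hd (tl b) = 1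
    · obtain ⟨a, ha⟩ := Set.ncard_eq_one.1 h₁
      have had : a ∈ {c | hd c = tl b} := ha ▸ Set.mem_singleton a
      have hab : SubtreeRel tl hd a b := ⟨had, had ▸ h₁⟩
      obtain ⟨r, p, hp⟩ := ih a hab
      exact ⟨r, p ++ [a], hp.append_singleton hab⟩
    · exact ⟨tl b, [], rfl, h₁, by simp⟩

end Stems

section RootArcs

/-- `a₀` is the first arc of the walk formed by the stem of `tl b` followed by `b`. -/
def IsRootArc (tl hd : A → V) (a₀ b : A) : Prop :=
  ∃ p, IsStem tl hd (tl a₀) p (tl b) ∧ (p ++ [b]).head? = some a₀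

theorem isRootArc_iff_of_subtreeRel {a₀ a b : A} (hab : SubtreeRel tl hd a b) :
    IsRootArc tl hd a₀ a ↔ IsRootArc tl hd a₀ b := by
  constructor
  · rintro ⟨p, hp, hhead⟩
    exact ⟨p ++ [a], hp.append_singleton hab, by simpa using hhead⟩
  · rintro ⟨q, hq, hhead⟩
    obtain ⟨p, rfl, hp⟩ := hq.exists_eq_append_singleton hab
    exact ⟨p, hp, by simpa using hhead⟩

theorem isRootArc_iff_of_mk_eq {a₀ a b : A}
    (h : Quot.mk (SubtreeRel tl hd) a = Quot.mk (SubtreeRel tl hd) b) :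
    IsRootArc tl hd a₀ a ↔ IsRootArc tl hd a₀ b :=
  Set.ext_iff.1 (congrArg (Quot.lift (fun b => {a₀ | IsRootArc tl hd a₀ b})
    fun _ _ hab => Set.ext fun _ => isRootArc_iff_of_subtreeRel hab) h) a₀

theorem exists_isRootArc [Finite A] (hacyc : Acyclic tl hd) (b : A) :
    ∃ a₀, IsRootArc tl hd a₀ b := by
  obtain ⟨r, p, hp⟩ := exists_isStem hacyc b
  cases p with
  | nil =>
    obtain rfl : r = tl b := hp.1
    exact ⟨b, [], hp, rfl⟩
  | cons c p =>
    obtain rfl : tl c = r := hp.1.1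
    exact ⟨c, c :: p, hp, rfl⟩

theorem IsRootArc.mk_eq {a₀ b : A} (h : IsRootArc tl hd a₀ b) :
    Quot.mk (SubtreeRel tl hd) a₀ = Quot.mk (SubtreeRel tl hd) b := by
  obtain ⟨p, hp, hhead⟩ := h
  rcases List.mem_append.1 (List.mem_of_mem_head? hhead) with ha₀ | ha₀
  · exact mk_eq_of_isArcWalk hp.1 hp.2.2 a₀ ha₀
  · rw [List.mem_singleton.1 ha₀]

theorem IsRootArc.inDeg_tl_ne_one {a₀ b : A} (h : IsRootArc tl hd a₀ b) :
    inDeg hd (tl a₀) ≠ 1 :=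
  let ⟨_, hp, _⟩ := h
  hp.2.1

theorem IsRootArc.of_mem_stem {a₀ b c : A} (h : IsRootArc tl hd a₀ b) {p : List A}
    (hp : IsStem tl hd (tl a₀) p (tl b)) (hc : c ∈ p) : IsRootArc tl hd a₀ c :=
  (isRootArc_iff_of_mk_eq (mk_eq_of_isArcWalk hp.1 hp.2.2 c hc)).2 h

theorem IsRootArc.setOf_mk_eq {a₀ b : A} (h : IsRootArc tl hd a₀ b) :
    {a | Quot.mk (SubtreeRel tl hd) a = Quot.mk _ b} = {a | IsRootArc tl hd a₀ a} :=
  Set.ext fun _ => ⟨fun ha => (isRootArc_iff_of_mk_eq ha).2 h,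
    fun ha => ha.mk_eq.symm.trans h.mk_eq⟩

theorem IsRootArc.mem_of_mem {a₀ b : A} (h : IsRootArc tl hd a₀ b) {u v : V} {P : List A}
    (hP : IsArcWalk tl hd u v P) (hu : inDeg hd u ≠ 1) (hb : b ∈ P) : a₀ ∈ P := by
  obtain ⟨p, hp, hhead⟩ := h
  obtain ⟨q, rest, rfl⟩ := List.append_of_mem hb
  obtain ⟨w, hq, rfl, -⟩ := isArcWalk_append_iff.1 hP
  obtain ⟨W, rfl, -⟩ := hq.exists_eq_append_of_inDeg_eq_one hu hp.1 hp.2.2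
  have := List.mem_of_mem_head? hhead
  simp only [List.mem_append, List.mem_singleton] at this
  simp only [List.append_assoc, List.mem_append, List.mem_cons]
  tauto

theorem IsRootArc.hd_ne (hacyc : Acyclic tl hd) {a₀ b : A} (h : IsRootArc tl hd a₀ b) :
    hd b ≠ tl a₀ := fun he => by
  obtain ⟨p, hp, -⟩ := h
  simpa using hacyc _ _ (hp.1.append (isArcWalk_singleton.2 ⟨rfl, he⟩))

theorem TwoMinimal.injOn_hd [Finite A] {s : V} {T : Set V} (hmin : TwoMinimal tl hd s T)
    (hsT : s ∉ T) (hacyc : Acyclic tl hd) (a₀ : A) :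
    Set.InjOn hd {b | IsRootArc tl hd a₀ b} := by
  intro b₁ hb₁ b₂ hb₂ hhd
  by_contra hne
  have hs : inDeg hd s ≠ 1 := by rw [hmin.inDeg_source hsT hacyc]; simp
  have hdeg : inDeg hd (hd b₂) ≠ 1 :=
    ((Set.one_lt_ncard_iff (s := {a | hd a = hd b₂})).2 ⟨b₁, b₂, hhd, rfl, hne⟩).ne'
  obtain ⟨t, ⟨P₁, P₂, h₁, h₂, h₁₂⟩, hess⟩ := hmin.exists_essential hsT b₂
  -- replace the stem of `b₂` on `Y` by the stem of `b₁` followed by `b₁`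
  have hreroute : ∀ X Y, IsArcWalk tl hd s t X → IsArcWalk tl hd s t Y → X.Disjoint Y →
      b₂ ∈ Y → ∃ Y', IsArcWalk tl hd s t Y' ∧ X.Disjoint Y' ∧ b₂ ∉ Y' := by
    intro X Y hX hY hXY hb₂Y
    have hYnd := hY.nodup hacyc
    obtain ⟨q, rest, rfl⟩ := List.append_of_mem hb₂Y
    obtain ⟨w, hq, rfl, hrest⟩ := isArcWalk_append_iff.1 hY
    obtain ⟨p₂, hp₂, -⟩ := id hb₂
    obtain ⟨W, rfl, hW⟩ := hq.exists_eq_append_of_inDeg_eq_one hs hp₂.1 hp₂.2.2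
    obtain ⟨p₁, hp₁, -⟩ := id hb₁
    refine ⟨W ++ p₁ ++ b₁ :: rest, (hW.append hp₁.1).append ⟨rfl, hhd ▸ hrest⟩, ?_, ?_⟩
    · -- an arc of the class on `X` would put `a₀` on both `X` and `Y`
      intro c hcX hc
      simp only [List.append_assoc, List.mem_append, List.mem_cons] at hc
      rcases hc with hc | hc | rfl | hc
      · exact hXY hcX (by simp [hc])
      · exact hXY ((hb₁.of_mem_stem hp₁ hc).mem_of_mem hX hs hcX) (hb₂.mem_of_mem hY hs hb₂Y)
      · exact hXY (hb₁.mem_of_mem hX hs hcX) (hb₂.mem_of_mem hY hs hb₂Y)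
      · exact hXY hcX (by simp [hc])
    · simp only [List.append_assoc, List.mem_append, List.mem_cons, not_or]
      simp only [List.append_assoc, List.nodup_append, List.nodup_cons, List.mem_append] at hYnd
      exact ⟨fun h => hYnd.2.2 _ h _ (by simp) rfl, fun h => hdeg (hp₁.2.2 _ h), Ne.symm hne,
        hYnd.2.1.2.1.1⟩
  rcases hess P₁ P₂ h₁ h₂ h₁₂ with hb | hb
  · obtain ⟨Y, hY, hXY, hb₂Y⟩ := hreroute P₂ P₁ h₂ h₁ h₁₂.symm hb
    exact (hess Y P₂ hY h₂ hXY.symm).elim hb₂Y (h₁₂ hb)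
  · obtain ⟨Y, hY, hXY, hb₂Y⟩ := hreroute P₁ P₂ h₁ h₂ h₁₂ hb
    exact (hess P₁ Y h₁ hY hXY).elim (fun h => h₁₂ h hb) hb₂Y

end RootArcs

theorem IsOutTree.eq_of_tl_eq {r r' : V} {S : Set A} (h : IsOutTree tl hd r S)
    (h' : IsOutTree tl hd r' S) {a : A} (ha : a ∈ S) (har : tl a = r) : r' = r := by
  obtain ⟨p, hpS, hp⟩ := h'.2.2 a ha
  rcases p.eq_nil_or_concat' with rfl | ⟨q, e, rfl⟩
  · exact (hp : r' = tl a).trans har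
  · obtain ⟨w, -, -, he⟩ := isArcWalk_append_iff.1 hp
    exact absurd (he.trans har) (h.1 e (hpS e (by simp)))

theorem TwoMinimal.isOutTree_setOf_isRootArc [Finite A] {s : V} {T : Set V}
    (hmin : TwoMinimal tl hd s T) (hsT : s ∉ T) (hacyc : Acyclic tl hd) (a₀ : A) :
    IsOutTree tl hd (tl a₀) {b | IsRootArc tl hd a₀ b} := by
  refine ⟨fun b hb => hb.hd_ne hacyc, hmin.injOn_hd hsT hacyc a₀, fun b hb => ?_⟩
  obtain ⟨p, hp, -⟩ := id hb
  exact ⟨p, fun c hc => hb.of_mem_stem hp hc, hp.1⟩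

theorem TwoMinimal.eq_source_or_inDeg_eq_two [Finite A] {s : V} {T : Set V}
    (hmin : TwoMinimal tl hd s T) (hsT : s ∉ T) {a : A} (ha : inDeg hd (tl a) ≠ 1) :
    tl a = s ∨ inDeg hd (tl a) = 2 := by
  have := hmin.inDeg_le_two hsT (tl a)
  by_cases h₀ : inDeg hd (tl a) = 0
  · exact Or.inl (eq_of_mem_reachSet_of_inDeg_eq_zero (hmin.tl_mem_reachSet hsT a) h₀)
  · exact Or.inr (by omega)

end

theorem subtree_classes_are_outTrees_general
    {V A : Type} [Fintype A] (tl hd : A → V) (s : V) (T : Set V)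
    (hsT : s ∉ T) (hacyc : Acyclic tl hd) (hmin : TwoMinimal tl hd s T) :
    ∀ x : Subtrees tl hd,
      ∃! r : V, (r = s ∨ inDeg hd r = 2) ∧
        IsOutTree tl hd r {a : A | Quot.mk (SubtreeRel tl hd) a = x} := by
  rintro ⟨b⟩
  obtain ⟨a₀, ha₀⟩ := exists_isRootArc hacyc b
  have htree := hmin.isOutTree_setOf_isRootArc hsT hacyc a₀
  have ha₀a₀ : IsRootArc tl hd a₀ a₀ := (isRootArc_iff_of_mk_eq ha₀.mk_eq).2 ha₀
  rw [ha₀.setOf_mk_eq]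
  exact ⟨tl a₀, ⟨hmin.eq_source_or_inDeg_eq_two hsT ha₀.inDeg_tl_ne_one, htree⟩,
    fun r ⟨_, hr⟩ => htree.eq_of_tl_eq hr ha₀a₀ rfl⟩

/-- in a 2-minimal acyclic multicast network every class of the
subtree decomposition is an out-tree rooted at a unique node, which is either the
source or a node of in-degree 2; in particular no class contains two arcs entering a
common node. -/
theorem subtree_classes_are_outTrees
    {V A : Type} [Fintype V] [Fintype A] (tl hd : A → V) (s : V) (T : Set V)
    (hsT : s ∉ T) (hacyc : Acyclic tl hd) (hmin : TwoMinimal tl hd s T) :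
    ∀ x : Subtrees tl hd,
      ∃! r : V, (r = s ∨ inDeg hd r = 2) ∧
        IsOutTree tl hd r {a : A | Quot.mk (SubtreeRel tl hd) a = x} :=
  subtree_classes_are_outTrees_general tl hd s T hsT hacyc hmin

end NCMinor
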